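/- Let X be a Helly graph such that every strictly increasing chain of round cliques of X has length at most N (with N ≥ 1). Let G be a group acting on X by graph automorphisms, let x₀ be a vertex of X, let S ⊆ G be a finite set, and let K > 0 satisfy d(x₀, s · x₀) ≤ K for every s ∈ S ∪ S⁻¹. Suppose g ∈ G is not elliptic (its orbits in X are unbounded). Then for every n ≥ 1 and every expression g^n = s₁ s₂ ⋯ s_m with each s_i ∈ S ∪ S⁻¹, one has m ≥ n/(2NK); that is, g is uniformly undistorted with respect to the word metric. -/

import Mathlib

/-!
Let `A = d(x₀, hⁿ x₀)`. Averaging the distance functions to `x₀, h x₀, …, hⁿ⁻¹ x₀` gives a metric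
form on which `h` acts with sup-displacement at most `A / n`. Lang's iteration `q ↦ (q + q*) / 2`,
where `q*(z) = sup_x (d(z, x) - q(x))`, is 1-Lipschitz for the sup distance and commutes with
automorphisms, so its limit is a point `p` of the injective hull moved at most `A / n` by `h`.
If `(N + 1) A < n`, the points `hʲ p` with `j ≤ N + 1` are pairwise closer than `1`, so by the
Helly property the sets `σᵢ = φ(p) ∩ h φ(p) ∩ ⋯ ∩ hⁱ φ(p)` are nonempty round cliques. This
decreasing chain of `N + 2` round cliques must stall, and then `h⁻¹` maps a nonempty clique into
itself, so the orbits of `h` are bounded. Hence `n ≤ (N + 1) d(x₀, hⁿ x₀)` for non-elliptic `h`,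
while a word of length `m` representing `gⁿ` moves `x₀` by at most `m K`.
-/

namespace HellyPaper

variable {V : Type*}

def ball (G : SimpleGraph V) (x : V) (r : ℕ) : Set V := {y | G.dist x y ≤ r}

def IsHellyGraph (G : SimpleGraph V) : Prop :=
  G.Connected ∧ ∀ S : Set (V × ℕ),
    (∀ p ∈ S, ∀ q ∈ S, (ball G p.1 p.2 ∩ ball G q.1 q.2).Nonempty) →
    (⋂ p ∈ S, ball G p.1 p.2).Nonempty

def IsRoundClique (G : SimpleGraph V) (σ : Set V) : Prop :=
  σ.Nonempty ∧ G.IsClique σ ∧ ∃ S : Set (V × ℕ), σ = ⋂ p ∈ S, ball G p.1 p.2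

/-- Combinatorial dimension at most `N`, in the form of Corollary C of the paper. -/
def DimAtMost (G : SimpleGraph V) (N : ℕ) : Prop :=
  ∀ (k : ℕ) (c : Fin (k + 1) → Set V),
    (∀ i, IsRoundClique G (c i)) → StrictMono c → k ≤ N

/-- The injective hull of `G`, realized as the set of extremal functions. -/
def InjHull (G : SimpleGraph V) : Set (V → ℝ) :=
  {f | (∀ x y : V, (G.dist x y : ℝ) ≤ f x + f y) ∧
    ∀ x : V, IsLUB (Set.range fun y => (G.dist x y : ℝ) - f y) (f x)}

noncomputable def supDist (f g : V → ℝ) : ℝ := ⨆ x, |f x - g x|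

/-- The action of automorphisms on the injective hull. -/
def hullAct (g : Equiv.Perm V) (f : V → ℝ) : V → ℝ := fun x => f (g⁻¹ x)

def IsGraphAut (G : SimpleGraph V) (g : Equiv.Perm V) : Prop :=
  ∀ x y, G.Adj (g x) (g y) ↔ G.Adj x y

/-- The round clique `φ(p) = ⋂_{x ∈ X} B(x, ⌈p(x)⌉)` of a point of the injective hull. -/
def phi (G : SimpleGraph V) (p : V → ℝ) : Set V :=
  {z | ∀ x : V, (G.dist x z : ℝ) ≤ (⌈p x⌉ : ℝ)}

def halfInt (p : V → ℝ) : Prop := ∀ x, ∃ k : ℕ, p x = (k : ℝ) / 2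

end HellyPaper

open Filter Topology

namespace SimpleGraph

variable {V : Type*} {G : SimpleGraph V}

lemma Connected.abs_dist_sub_dist_le (hconn : G.Connected) (x a b : V) :
    |(G.dist x a : ℝ) - G.dist x b| ≤ G.dist a b := by
  have hab : (G.dist x a : ℝ) ≤ G.dist x b + G.dist b a := by exact_mod_cast hconn.dist_triangle
  have hba : (G.dist x b : ℝ) ≤ G.dist x a + G.dist a b := by exact_mod_cast hconn.dist_triangle
  rw [dist_comm (u := b)] at hab
  exact abs_sub_le_iff.2 ⟨by linarith, by linarith⟩

lemma Connected.exists_dist_le_dist_le (hconn : G.Connected) {x y : V} {r s : ℕ}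
    (h : G.dist x y ≤ r + s) : ∃ z, G.dist x z ≤ r ∧ G.dist z y ≤ s := by
  obtain ⟨w, hw⟩ := hconn.exists_walk_length_eq_dist x y
  refine ⟨w.getVert r, (dist_le (w.take r)).trans ?_, (dist_le (w.drop r)).trans ?_⟩
  · rw [Walk.take_length]
    exact min_le_left _ _
  · rw [Walk.drop_length]
    omega

lemma IsClique.dist_le_one {C : Set V} (hC : G.IsClique C) {x y : V} (hx : x ∈ C) (hy : y ∈ C) :
    G.dist x y ≤ 1 := by
  rcases eq_or_ne x y with rfl | hne
  · simp
  · exact (dist_eq_one_iff_adj.2 (hC hx hy hne)).le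

end SimpleGraph

namespace HellyPaper

open SimpleGraph

variable {V : Type*} {G : SimpleGraph V}

section Automorphisms

variable {e : Equiv.Perm V}

def graphAutSubgroup (G : SimpleGraph V) : Subgroup (Equiv.Perm V) where
  carrier := {e | IsGraphAut G e}
  mul_mem' ha hb x y := (ha _ _).trans (hb x y)
  one_mem' _ _ := Iff.rfl
  inv_mem' {e} he x y := by simpa using (he (e⁻¹ x) (e⁻¹ y)).symm

lemma IsGraphAut.inv (he : IsGraphAut G e) : IsGraphAut G e⁻¹ :=
  (graphAutSubgroup G).inv_mem he

lemma IsGraphAut.pow (he : IsGraphAut G e) (k : ℕ) : IsGraphAut G (e ^ k) :=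
  (graphAutSubgroup G).pow_mem he k

lemma IsGraphAut.zpow (he : IsGraphAut G e) (k : ℤ) : IsGraphAut G (e ^ k) :=
  (graphAutSubgroup G).zpow_mem he k

lemma IsGraphAut.edist_le (he : IsGraphAut G e) (x y : V) :
    G.edist (e x) (e y) ≤ G.edist x y := by
  rcases eq_or_ne (G.edist x y) ⊤ with h | h
  · simp [h]
  obtain ⟨w, hw⟩ := exists_walk_of_edist_ne_top h
  let f : G →g G := ⟨e, (he _ _).2⟩
  calc G.edist (e x) (e y) ≤ (w.map f).length := SimpleGraph.edist_le _
    _ = G.edist x y := by rw [Walk.length_map, hw]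

lemma IsGraphAut.dist_eq (he : IsGraphAut G e) (x y : V) : G.dist (e x) (e y) = G.dist x y := by
  refine congrArg ENat.toNat (le_antisymm (he.edist_le x y) ?_)
  simpa using he.inv.edist_le (e x) (e y)

lemma IsGraphAut.dist_inv_apply_left (he : IsGraphAut G e) (x y : V) :
    G.dist (e⁻¹ x) y = G.dist x (e y) := by
  simpa using (he.dist_eq (e⁻¹ x) y).symm

lemma IsGraphAut.dist_inv_apply_right (he : IsGraphAut G e) (x y : V) :
    G.dist x (e⁻¹ y) = G.dist (e x) y := by
  simpa using (he.dist_eq x (e⁻¹ y)).symm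

end Automorphisms

section MetricForm

variable {q q' : V → ℝ} {β : ℝ}

def IsMetricForm (G : SimpleGraph V) (q : V → ℝ) : Prop :=
  ∀ x y, (G.dist x y : ℝ) ≤ q x + q y

noncomputable def metricDual (G : SimpleGraph V) (q : V → ℝ) (z : V) : ℝ :=
  ⨆ x, (G.dist z x : ℝ) - q x

lemma IsMetricForm.nonneg (hq : IsMetricForm G q) (x : V) : 0 ≤ q x := by
  have := hq x x
  simp only [dist_self, Nat.cast_zero] at this
  linarith

lemma IsMetricForm.hullAct (hq : IsMetricForm G q) {e : Equiv.Perm V} (he : IsGraphAut G e) :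
    IsMetricForm G (hullAct e q) := fun x y => by
  simpa only [HellyPaper.hullAct, he.inv.dist_eq] using hq (e⁻¹ x) (e⁻¹ y)

lemma IsMetricForm.sum_dist_div (hconn : G.Connected) (a : ℕ → V) {n : ℕ} (hn : 0 < n) :
    IsMetricForm G fun x => (∑ i ∈ Finset.range n, (G.dist x (a i) : ℝ)) / n := by
  intro x y
  rw [← add_div, le_div_iff₀ (by positivity), ← Finset.sum_add_distrib]
  calc (G.dist x y : ℝ) * n = ∑ _i ∈ Finset.range n, (G.dist x y : ℝ) := by simp [mul_comm]
    _ ≤ ∑ i ∈ Finset.range n, ((G.dist x (a i) : ℝ) + G.dist y (a i)) := by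
      refine Finset.sum_le_sum fun i _ => ?_
      rw [dist_comm (u := y)]
      exact_mod_cast hconn.dist_triangle

lemma IsMetricForm.bddAbove (hq : IsMetricForm G q) (z : V) :
    BddAbove (Set.range fun x => (G.dist z x : ℝ) - q x) :=
  ⟨q z, Set.forall_mem_range.2 fun x => by linarith [hq z x]⟩

lemma le_metricDual (hq : IsMetricForm G q) (z x : V) :
    (G.dist z x : ℝ) - q x ≤ metricDual G q z :=
  le_ciSup (hq.bddAbove z) x

lemma metricDual_hullAct {e : Equiv.Perm V} (he : IsGraphAut G e) (q : V → ℝ) (z : V) :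
    metricDual G (hullAct e q) z = metricDual G q (e⁻¹ z) := by
  rw [metricDual, ← (e : V ≃ V).iSup_comp]
  simp only [hullAct, ← he.dist_inv_apply_left]
  simp [metricDual]

variable [Nonempty V]

lemma metricDual_le (hq : IsMetricForm G q) (z : V) : metricDual G q z ≤ q z :=
  ciSup_le fun x => by linarith [hq z x]

lemma metricDual_le_metricDual_add (hq' : IsMetricForm G q') (h : ∀ x, q' x ≤ q x + β) (z : V) :
    metricDual G q z ≤ metricDual G q' z + β :=
  ciSup_le fun x => by linarith [h x, le_metricDual hq' z x]

lemma metricDual_anti (hq : IsMetricForm G q) (h : ∀ x, q x ≤ q' x) (z : V) :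
    metricDual G q' z ≤ metricDual G q z := by
  simpa using metricDual_le_metricDual_add (β := 0) hq (by simpa using h) z

end MetricForm

section LangIteration

variable {q q' : V → ℝ} {β : ℝ}

noncomputable def langStep (G : SimpleGraph V) (q : V → ℝ) (x : V) : ℝ :=
  (q x + metricDual G q x) / 2

noncomputable def langSeq (G : SimpleGraph V) (q : V → ℝ) (t : ℕ) : V → ℝ :=
  (langStep G)^[t] q

noncomputable def langLimit (G : SimpleGraph V) (q : V → ℝ) (x : V) : ℝ :=
  ⨅ t, langSeq G q t x

lemma langSeq_succ (q : V → ℝ) (t : ℕ) : langSeq G q (t + 1) = langStep G (langSeq G q t) :=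
  Function.iterate_succ_apply' _ _ _

lemma langStep_hullAct {e : Equiv.Perm V} (he : IsGraphAut G e) (q : V → ℝ) :
    langStep G (hullAct e q) = hullAct e (langStep G q) := by
  funext x
  simp only [langStep, metricDual_hullAct he, hullAct]

lemma langLimit_hullAct {e : Equiv.Perm V} (he : IsGraphAut G e) (q : V → ℝ) :
    langLimit G (hullAct e q) = hullAct e (langLimit G q) := by
  have hcomm : Function.Commute (hullAct e) (langStep G) := fun q => (langStep_hullAct he q).symm
  funext x
  simp only [langLimit, langSeq, ← (hcomm.iterate_right _) q, hullAct]

lemma IsMetricForm.langStep (hq : IsMetricForm G q) : IsMetricForm G (langStep G q) := by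
  intro x y
  have hxy := le_metricDual hq x y
  have hyx := le_metricDual hq y x
  rw [dist_comm] at hyx
  simp only [HellyPaper.langStep]
  linarith

lemma IsMetricForm.langSeq (hq : IsMetricForm G q) (t : ℕ) : IsMetricForm G (langSeq G q t) := by
  induction t with
  | zero => exact hq
  | succ t ih => rw [langSeq_succ]; exact ih.langStep

lemma langLimit_le_langSeq (hq : IsMetricForm G q) (t : ℕ) (x : V) :
    langLimit G q x ≤ langSeq G q t x :=
  ciInf_le ⟨0, Set.forall_mem_range.2 fun t => (hq.langSeq t).nonneg x⟩ t

variable [Nonempty V]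

lemma langStep_le (hq : IsMetricForm G q) (x : V) : langStep G q x ≤ q x := by
  linarith [metricDual_le hq x, show langStep G q x = (q x + metricDual G q x) / 2 from rfl]

lemma abs_langStep_sub_le (hq : IsMetricForm G q) (hq' : IsMetricForm G q')
    (h : ∀ x, |q x - q' x| ≤ β) (x : V) : |langStep G q x - langStep G q' x| ≤ β := by
  have h₁ := metricDual_le_metricDual_add (q := q) (β := β) hq'
    (fun y => by linarith [abs_le.1 (h y)]) x
  have h₂ := metricDual_le_metricDual_add (q := q') (β := β) hq
    (fun y => by linarith [abs_le.1 (h y)]) x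
  have h₃ := abs_le.1 (h x)
  simp only [langStep]
  exact abs_le.2 ⟨by linarith, by linarith⟩

lemma langStep_sub_metricDual_le (hq : IsMetricForm G q) (z : V) :
    langStep G q z - metricDual G (langStep G q) z ≤ (q z - metricDual G q z) / 2 := by
  have := metricDual_anti hq.langStep (langStep_le hq) z
  simp only [langStep] at this ⊢
  linarith

lemma langSeq_antitone (hq : IsMetricForm G q) (x : V) : Antitone fun t => langSeq G q t x :=
  antitone_nat_of_succ_le fun t => by rw [langSeq_succ]; exact langStep_le (hq.langSeq t) x

lemma tendsto_langSeq (hq : IsMetricForm G q) (x : V) :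
    Tendsto (fun t => langSeq G q t x) atTop (𝓝 (langLimit G q x)) :=
  tendsto_atTop_ciInf (langSeq_antitone hq x)
    ⟨0, Set.forall_mem_range.2 fun t => (hq.langSeq t).nonneg x⟩

lemma IsMetricForm.langLimit (hq : IsMetricForm G q) : IsMetricForm G (langLimit G q) :=
  fun x y => ge_of_tendsto' ((tendsto_langSeq hq x).add (tendsto_langSeq hq y))
    fun t => hq.langSeq t x y

lemma langSeq_sub_metricDual_le (hq : IsMetricForm G q) (z : V) (t : ℕ) :
    langSeq G q t z - metricDual G (langSeq G q t) z ≤ (q z - metricDual G q z) / 2 ^ t := by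
  induction t with
  | zero => simp [langSeq]
  | succ t ih =>
    rw [langSeq_succ, pow_succ, ← div_div]
    linarith [langStep_sub_metricDual_le (hq.langSeq t) z]

lemma langLimit_le_metricDual (hq : IsMetricForm G q) (z : V) :
    langLimit G q z ≤ metricDual G (langLimit G q) z := by
  have hdecay : Tendsto (fun t : ℕ => metricDual G (langLimit G q) z
      + (q z - metricDual G q z) / 2 ^ t) atTop (𝓝 (metricDual G (langLimit G q) z + 0)) :=
    tendsto_const_nhds.add <|
      (tendsto_pow_atTop_atTop_of_one_lt one_lt_two).const_div_atTop (q z - metricDual G q z)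
  refine ge_of_tendsto' (by simpa using hdecay) fun t => ?_
  have := metricDual_anti hq.langLimit (fun x => langLimit_le_langSeq hq t x) z
  linarith [langLimit_le_langSeq hq t z, langSeq_sub_metricDual_le hq z t]

lemma langLimit_mem_injHull (hq : IsMetricForm G q) : langLimit G q ∈ InjHull G := by
  refine ⟨hq.langLimit, fun x => ?_⟩
  have hext : metricDual G (langLimit G q) x = langLimit G q x :=
    le_antisymm (metricDual_le hq.langLimit x) (langLimit_le_metricDual hq x)
  rw [← hext]
  exact isLUB_ciSup (hq.langLimit.bddAbove x)

lemma abs_langLimit_sub_le (hq : IsMetricForm G q) (hq' : IsMetricForm G q')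
    (h : ∀ x, |q x - q' x| ≤ β) (x : V) : |langLimit G q x - langLimit G q' x| ≤ β := by
  have hseq : ∀ t x, |langSeq G q t x - langSeq G q' t x| ≤ β := by
    intro t
    induction t with
    | zero => exact h
    | succ t ih =>
      rw [langSeq_succ, langSeq_succ]
      exact abs_langStep_sub_le (hq.langSeq t) (hq'.langSeq t) ih
  exact le_of_tendsto' ((tendsto_langSeq hq x).sub (tendsto_langSeq hq' x)).abs (hseq · x)

end LangIteration

section RoundCliques

variable {ι : Type*}

lemma mem_phi_hullAct {e : Equiv.Perm V} (he : IsGraphAut G e) (q : V → ℝ) (z : V) :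
    z ∈ phi G (hullAct e q) ↔ e⁻¹ z ∈ phi G q := by
  simp only [phi, hullAct, Set.mem_ofPred_eq]
  constructor
  · intro h x
    have := h (e x)
    rwa [← he.dist_inv_apply_right, ← Equiv.Perm.mul_apply, inv_mul_cancel,
      Equiv.Perm.one_apply] at this
  · intro h x
    have := h (e⁻¹ x)
    rwa [he.inv.dist_eq] at this

lemma isClique_phi (hconn : G.Connected) {p : V → ℝ} (hp : p ∈ InjHull G) :
    G.IsClique (phi G p) := by
  intro z hz z' hz' hne
  have hz'_le : p z' ≤ 1 := by
    refine (hp.2 z').2 (Set.forall_mem_range.2 fun x => ?_)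
    have := hz' x
    rw [dist_comm]
    linarith [Int.ceil_lt_add_one (p x)]
  have hdist : (G.dist z' z : ℝ) ≤ 1 :=
    (hz z').trans (by exact_mod_cast Int.ceil_le.2 (by exact_mod_cast hz'_le))
  have hdist' : G.dist z' z = 1 :=
    le_antisymm (by exact_mod_cast hdist) (hconn.pos_dist_of_ne (Ne.symm hne))
  exact (dist_eq_one_iff_adj.1 hdist').symm

def ceilBalls (q : ι → V → ℝ) (s : Set ι) : Set (V × ℕ) :=
  {b | ∃ j ∈ s, ∃ x, b = (x, ⌈q j x⌉₊)}

lemma biInter_phi_eq_biInter_ball {q : ι → V → ℝ} {s : Set ι} (hq : ∀ j ∈ s, ∀ x, 0 ≤ q j x) :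
    ⋂ j ∈ s, phi G (q j) = ⋂ b ∈ ceilBalls q s, ball G b.1 b.2 := by
  ext z
  simp only [Set.mem_iInter, phi, ball, ceilBalls, Set.mem_ofPred_eq, forall_exists_index,
    and_imp]
  constructor
  · rintro h _ j hj x rfl
    have := h j hj x
    rw [← natCast_ceil_eq_intCast_ceil (hq j hj x)] at this
    exact_mod_cast this
  · intro h j hj x
    rw [← natCast_ceil_eq_intCast_ceil (hq j hj x)]
    exact_mod_cast h _ j hj x rfl

lemma IsHellyGraph.nonempty_biInter_phi (hH : IsHellyGraph G) {q : ι → V → ℝ} {s : Set ι}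
    (hq : ∀ j ∈ s, IsMetricForm G (q j)) {β : ℝ} (hβ : β < 1)
    (hclose : ∀ j ∈ s, ∀ l ∈ s, ∀ x, q j x ≤ q l x + β) :
    (⋂ j ∈ s, phi G (q j)).Nonempty := by
  rw [biInter_phi_eq_biInter_ball fun j hj => (hq j hj).nonneg]
  refine hH.2 _ ?_
  rintro _ ⟨j, hj, x, rfl⟩ _ ⟨l, hl, y, rfl⟩
  have hlt : (G.dist x y : ℝ) < ⌈q j x⌉₊ + ⌈q l y⌉₊ + 1 := by
    linarith [hq j hj x y, hclose j hj l hl y, Nat.le_ceil (q j x), Nat.le_ceil (q l y)]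
  have hle : G.dist x y ≤ ⌈q j x⌉₊ + ⌈q l y⌉₊ := Nat.lt_succ_iff.1 (by exact_mod_cast hlt)
  obtain ⟨z, hxz, hzy⟩ := hH.1.exists_dist_le_dist_le hle
  exact ⟨z, hxz, by rwa [ball, Set.mem_ofPred_eq, dist_comm]⟩

end RoundCliques

section CliqueChain

variable {h : Equiv.Perm V} {p : V → ℝ}

def cliqueChain (G : SimpleGraph V) (h : Equiv.Perm V) (p : V → ℝ) (i : ℕ) : Set V :=
  ⋂ j ∈ Set.Iic i, phi G (hullAct (h ^ j) p)

lemma cliqueChain_antitone : Antitone (cliqueChain G h p) :=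
  fun _ _ hii' => Set.biInter_subset_biInter_left (Set.Iic_subset_Iic.2 hii')

lemma mapsTo_inv_cliqueChain (hh : IsGraphAut G h) (i : ℕ) :
    Set.MapsTo ⇑h⁻¹ (cliqueChain G h p (i + 1)) (cliqueChain G h p i) := by
  intro z hz
  simp only [cliqueChain, Set.mem_iInter₂, Set.mem_Iic] at hz ⊢
  intro j hj
  have hzj := hz (j + 1) (by omega)
  rw [mem_phi_hullAct (hh.pow _)] at hzj ⊢
  rwa [← Equiv.Perm.mul_apply, ← mul_inv_rev, ← pow_succ']

lemma isRoundClique_cliqueChain (hH : IsHellyGraph G) (hp : p ∈ InjHull G)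
    (hh : IsGraphAut G h) {i : ℕ} {β : ℝ} (hβ : β < 1)
    (hclose : ∀ j ≤ i, ∀ l ≤ i, ∀ x, hullAct (h ^ j) p x ≤ hullAct (h ^ l) p x + β) :
    IsRoundClique G (cliqueChain G h p i) := by
  have hq : ∀ j ∈ Set.Iic i, IsMetricForm G (hullAct (h ^ j) p) :=
    fun j _ => IsMetricForm.hullAct hp.1 (hh.pow j)
  refine ⟨hH.nonempty_biInter_phi hq hβ hclose, ?_, _, biInter_phi_eq_biInter_ball
    fun j hj => (hq j hj).nonneg⟩
  exact (isClique_phi hH.1 hp).subset (Set.biInter_subset_of_mem (Set.mem_Iic.2 i.zero_le))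

lemma DimAtMost.exists_succ_eq {N : ℕ} (hdim : DimAtMost G N) {σ : ℕ → Set V} (hσ : Antitone σ)
    (hround : ∀ i ≤ N + 1, IsRoundClique G (σ i)) : ∃ i ≤ N, σ (i + 1) = σ i := by
  by_contra! hne
  have hmono : StrictMono fun l : Fin (N + 2) => σ (N + 1 - l) := by
    refine Fin.strictMono_iff_lt_succ.2 fun l => ?_
    have hl := l.isLt
    simp only [Fin.val_castSucc, Fin.val_succ]
    rw [show N + 1 - l = N - l + 1 by omega, show N + 1 - (l + 1) = N - l by omega]
    exact (hσ (Nat.le_succ _)).lt_of_ne (hne _ (by omega))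
  have := hdim (N + 1) _ (fun l => hround _ (by omega)) hmono
  omega

end CliqueChain

section Translation

variable {h : Equiv.Perm V}

lemma dist_zpow_le_of_mapsTo (hconn : G.Connected) (hh : IsGraphAut G h) {C : Set V}
    (hC : G.IsClique C) {z : V} (hz : z ∈ C) (hmaps : Set.MapsTo ⇑h⁻¹ C C) (x₀ : V) (k : ℤ) :
    G.dist x₀ ((h ^ k) x₀) ≤ 2 * G.dist x₀ z + 1 := by
  have hback : ∀ m : ℕ, G.dist z ((h⁻¹ ^ m) z) ≤ 1 := fun m =>
    hC.dist_le_one hz (by rw [Equiv.Perm.coe_pow]; exact hmaps.iterate m hz)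
  have hzk : G.dist z ((h ^ k) z) ≤ 1 := by
    obtain ⟨m, rfl | rfl⟩ := Int.eq_nat_or_neg k
    · rw [zpow_natCast, ← (hh.inv.pow m).dist_eq, inv_pow, ← Equiv.Perm.mul_apply,
        inv_mul_cancel, Equiv.Perm.one_apply, dist_comm, ← inv_pow]
      exact hback m
    · rw [zpow_neg, zpow_natCast, ← inv_pow]
      exact hback m
  calc G.dist x₀ ((h ^ k) x₀)
      ≤ G.dist x₀ z + G.dist z ((h ^ k) z) + G.dist ((h ^ k) z) ((h ^ k) x₀) :=
        hconn.dist_triangle.trans (Nat.add_le_add_right hconn.dist_triangle _)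
    _ ≤ 2 * G.dist x₀ z + 1 := by rw [(hh.zpow k).dist_eq, dist_comm (u := z) (v := x₀)]; omega

lemma exists_mem_injHull_abs_hullAct_sub_le (hconn : G.Connected) (hh : IsGraphAut G h)
    (x₀ : V) {n : ℕ} (hn : 0 < n) :
    ∃ p ∈ InjHull G, ∀ x, |hullAct h p x - p x| ≤ G.dist x₀ ((h ^ n) x₀) / n := by
  have := hconn.nonempty
  set q : V → ℝ := fun x => (∑ i ∈ Finset.range n, (G.dist x ((h ^ i) x₀) : ℝ)) / n with hq_def
  have hq : IsMetricForm G q := IsMetricForm.sum_dist_div hconn _ hn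
  have hshift : ∀ x, |hullAct h q x - q x| ≤ G.dist x₀ ((h ^ n) x₀) / n := by
    intro x
    have htel : hullAct h q x - q x = ((G.dist x ((h ^ n) x₀) : ℝ) - G.dist x x₀) / n := by
      have := Finset.sum_range_sub (fun i => (G.dist x ((h ^ i) x₀) : ℝ)) n
      simp only [pow_succ', Equiv.Perm.mul_apply, pow_zero, Equiv.Perm.one_apply] at this
      simp only [hq_def, hullAct, ← sub_div, ← Finset.sum_sub_distrib, hh.dist_inv_apply_left, this]
    rw [htel, abs_div, Nat.abs_cast, abs_sub_comm]
    exact div_le_div_of_nonneg_right (hconn.abs_dist_sub_dist_le x _ _) (Nat.cast_nonneg n)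
  refine ⟨langLimit G q, langLimit_mem_injHull hq, fun x => ?_⟩
  rw [← langLimit_hullAct hh]
  exact abs_langLimit_sub_le (hq.hullAct hh) hq hshift x

lemma abs_hullAct_pow_sub_le {f : V → ℝ} {δ : ℝ} (hδ : ∀ x, |hullAct h f x - f x| ≤ δ)
    {M j l : ℕ} (hj : j ≤ M) (hl : l ≤ M) (x : V) :
    |hullAct (h ^ j) f x - hullAct (h ^ l) f x| ≤ M * δ := by
  have hstep : ∀ j k : ℕ, ∀ x, |hullAct (h ^ (j + k)) f x - hullAct (h ^ j) f x| ≤ k * δ := by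
    intro j k
    induction k with
    | zero => simp
    | succ k ih =>
      intro x
      have hsucc : hullAct (h ^ (j + (k + 1))) f x = hullAct h f ((h ^ (j + k))⁻¹ x) := by
        simp only [hullAct, ← add_assoc, pow_succ, mul_inv_rev, Equiv.Perm.mul_apply]
      calc |hullAct (h ^ (j + (k + 1))) f x - hullAct (h ^ j) f x|
          ≤ |hullAct h f ((h ^ (j + k))⁻¹ x) - f ((h ^ (j + k))⁻¹ x)|
            + |hullAct (h ^ (j + k)) f x - hullAct (h ^ j) f x| := by
            rw [hsucc]
            exact abs_sub_le _ _ _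
        _ ≤ δ + k * δ := add_le_add (hδ _) (ih x)
        _ = (k + 1 : ℕ) * δ := by push_cast; ring
  wlog hjl : j ≤ l generalizing j l
  · rw [abs_sub_comm]
    exact this hl hj (le_of_not_ge hjl)
  obtain ⟨k, rfl⟩ := Nat.exists_eq_add_of_le hjl
  rw [abs_sub_comm]
  have hδ0 : 0 ≤ δ := (abs_nonneg _).trans (hδ x)
  exact (hstep j k x).trans (mul_le_mul_of_nonneg_right (by exact_mod_cast (by omega : k ≤ M)) hδ0)

theorem IsHellyGraph.natCast_le_mul_dist_pow (hH : IsHellyGraph G) {N : ℕ} (hdim : DimAtMost G N)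
    (hh : IsGraphAut G h) (x₀ : V) (hunb : ∀ R : ℝ, ∃ k : ℤ, R < G.dist x₀ ((h ^ k) x₀))
    (n : ℕ) : (n : ℝ) ≤ (N + 1) * G.dist x₀ ((h ^ n) x₀) := by
  by_contra! hlt
  have hn : 0 < n := by
    have : (0 : ℝ) ≤ (N + 1) * G.dist x₀ ((h ^ n) x₀) := by positivity
    exact_mod_cast this.trans_lt hlt
  obtain ⟨p, hp, hδ⟩ := exists_mem_injHull_abs_hullAct_sub_le hH.1 hh x₀ hn
  have hβ : ((N + 1 : ℕ) : ℝ) * (G.dist x₀ ((h ^ n) x₀) / n) < 1 := by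
    rw [mul_div_assoc', div_lt_one (by positivity)]
    push_cast
    exact hlt
  have hround : ∀ i ≤ N + 1, IsRoundClique G (cliqueChain G h p i) := fun i hi =>
    isRoundClique_cliqueChain hH hp hh hβ fun j hj l hl x =>
      by linarith [(abs_le.1 (abs_hullAct_pow_sub_le hδ (hj.trans hi) (hl.trans hi) x)).2]
  obtain ⟨i, hi, hstat⟩ := hdim.exists_succ_eq cliqueChain_antitone hround
  obtain ⟨z, hz⟩ := (hround i (by omega)).1
  have hmaps := mapsTo_inv_cliqueChain (p := p) hh i
  rw [hstat] at hmaps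
  obtain ⟨k, hk⟩ := hunb (2 * G.dist x₀ z + 1)
  have hbdd : (G.dist x₀ ((h ^ k) x₀) : ℝ) ≤ 2 * G.dist x₀ z + 1 := by
    exact_mod_cast dist_zpow_le_of_mapsTo hH.1 hh (hround i (by omega)).2.1 hz hmaps x₀ k
  linarith

end Translation

section WordLength

variable {Γ : Type*} [Group Γ]

lemma dist_list_prod_le (hconn : G.Connected) (φ : Γ →* Equiv.Perm V)
    (hφ : ∀ γ, IsGraphAut G (φ γ)) (x₀ : V) {K : ℝ} (L : List Γ)
    (hL : ∀ s ∈ L, (G.dist x₀ (φ s x₀) : ℝ) ≤ K) :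
    (G.dist x₀ (φ L.prod x₀) : ℝ) ≤ L.length * K := by
  induction L with
  | nil => simp
  | cons s L ih =>
    have hs := hL s List.mem_cons_self
    have hrest := ih fun t ht => hL t (List.mem_cons_of_mem _ ht)
    have htri : (G.dist x₀ (φ (s * L.prod) x₀) : ℝ)
        ≤ G.dist x₀ (φ s x₀) + G.dist x₀ (φ L.prod x₀) := by
      rw [map_mul, Equiv.Perm.mul_apply, ← (hφ s).dist_eq x₀ (φ L.prod x₀)]
      exact_mod_cast hconn.dist_triangle
    rw [List.prod_cons, List.length_cons]
    push_cast
    linarith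

end WordLength

end HellyPaper

namespace HellyPaper

/-- Uniform non-distortion: if a group Γ acts on a Helly graph of combinatorial
dimension at most N ≥ 1, every generator moves the basepoint at most K, and
g ∈ Γ is not elliptic, then any word in the generators representing gⁿ has
length at least n/(2NK). -/
theorem stmt14 {V : Type*} {Γ : Type*} [Group Γ] (G : SimpleGraph V)
    (N : ℕ) (hN : 1 ≤ N)
    (hHelly : IsHellyGraph G) (hdim : DimAtMost G N)
    (φ : Γ →* Equiv.Perm V) (hφ : ∀ γ : Γ, IsGraphAut G (φ γ))
    (x₀ : V) (S : Finset Γ) (K : ℝ) (hK0 : 0 < K)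
    (hK : ∀ s : Γ, (s ∈ S ∨ s⁻¹ ∈ S) → (G.dist x₀ (φ s x₀) : ℝ) ≤ K)
    (g : Γ)
    (hnotell : ∀ R : ℝ, ∃ n : ℤ, R < (G.dist x₀ (φ (g ^ n) x₀) : ℝ)) :
    ∀ n : ℕ, 1 ≤ n → ∀ (m : ℕ) (w : Fin m → Γ),
      (∀ i, w i ∈ S ∨ (w i)⁻¹ ∈ S) → g ^ n = (List.ofFn w).prod →
      (n : ℝ) / (2 * N * K) ≤ (m : ℝ) := by
  intro n _ m w hw hprod
  have hword : (G.dist x₀ ((φ g ^ n) x₀) : ℝ) ≤ m * K := by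
    rw [← map_pow, hprod]
    simpa using dist_list_prod_le hHelly.1 φ hφ x₀ (List.ofFn w) fun s hs => by
      obtain ⟨i, rfl⟩ := (List.mem_ofFn' w s).1 hs
      exact hK _ (hw i)
  have htrans := hHelly.natCast_le_mul_dist_pow hdim (hφ g) x₀
    (by simpa only [map_zpow] using hnotell) n
  have hN2 : (N : ℝ) + 1 ≤ 2 * N := by norm_cast; omega
  rw [div_le_iff₀ (by positivity)]
  calc (n : ℝ) ≤ (N + 1) * G.dist x₀ ((φ g ^ n) x₀) := htrans
    _ ≤ 2 * N * (m * K) := by gcongr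
    _ = m * (2 * N * K) := by ring

end HellyPaper
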